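/- For every α ∈ (0, 1), ½ · Im ∫_{−π/2}^{π/2} ( 1/(e^{iθ} − α) − 1/(e^{iθ} + α) + 1/(e^{iθ} + 1/α) − 1/(e^{iθ} − 1/α) ) · i·e^{iθ} dθ = 4·arctan(α). -/

import Mathlib

/-!
The integrand is the derivative of a sum of four logarithms `±log (e^{iθ} - c)`, each of which
stays off the branch cut of `log` on the right half circle, once the factor with `c = 1/α > 1` is
written as `log (1/α - e^{iθ})`. The imaginary part of the integral is therefore the total change
of argument between `-i` and `i`, and `arg (x ± i) = ±(π/2 - arctan x)` together with
`arctan (1/α) = π/2 - arctan α` gives `8 arctan α`.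
-/

open intervalIntegral Complex
open scoped Real

theorem arg_ofReal_add_I (x : ℝ) : arg (x + I) = π / 2 - Real.arctan x := by
  have hr : 0 < √(1 + x ^ 2) := by positivity
  have hr' : (√(1 + x ^ 2) : ℂ) ≠ 0 := by exact_mod_cast hr.ne'
  have hx : (x : ℂ) + I = ↑√(1 + x ^ 2) *
      (cos ↑(π / 2 - Real.arctan x) + sin ↑(π / 2 - Real.arctan x) * I) := by
    rw [← ofReal_cos, ← ofReal_sin, Real.cos_pi_div_two_sub, Real.sin_pi_div_two_sub,
      Real.sin_arctan, Real.cos_arctan]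
    push_cast
    field_simp
  rw [hx, arg_mul_cos_add_sin_mul_I hr]
  constructor <;> linarith [Real.arctan_lt_pi_div_two x, Real.neg_pi_div_two_lt_arctan x]

theorem arg_ofReal_sub_I (x : ℝ) : arg (x - I) = Real.arctan x - π / 2 := by
  have hconj : (x : ℂ) - I = (starRingEnd ℂ) (x + I) := by simp [conj_ofReal, sub_eq_add_neg]
  rw [hconj, arg_conj, arg_ofReal_add_I, if_neg (by linarith [Real.neg_pi_div_two_lt_arctan x])]
  ring

theorem im_log_ofReal_add_I_sub_log_ofReal_sub_I (x : ℝ) :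
    (log (x + I) - log (x - I)).im = π - 2 * Real.arctan x := by
  rw [sub_im, log_im, log_im, arg_ofReal_add_I, arg_ofReal_sub_I]
  ring

theorem sub_ofReal_mem_slitPlane {z : ℂ} {c : ℝ} (hz : ‖z‖ = 1) (hre : 0 ≤ z.re) (hc : c < 1) :
    z - c ∈ slitPlane := by
  rw [mem_slitPlane_iff, sub_re, sub_im, ofReal_re, ofReal_im, sub_zero]
  by_contra! h
  have hsq : z.re * z.re + z.im * z.im = 1 := by
    rw [← normSq_apply, ← Complex.sq_norm, hz, one_pow]
  nlinarith

theorem ofReal_sub_mem_slitPlane {z : ℂ} {c : ℝ} (hz : ‖z‖ = 1) (hc : 1 < c) :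
    (c : ℂ) - z ∈ slitPlane := by
  refine mem_slitPlane_iff.2 (Or.inl ?_)
  rw [sub_re, ofReal_re]
  linarith [re_le_norm z]

theorem exp_ofReal_mul_I_sub_mem_slitPlane {θ : ℝ} (hθ : θ ∈ Set.Icc (-(π / 2)) (π / 2)) {c : ℝ}
    (hc : c < 1) : exp (θ * I) - c ∈ slitPlane :=
  sub_ofReal_mem_slitPlane (norm_exp_ofReal_mul_I θ)
    (exp_ofReal_mul_I_re θ ▸ Real.cos_nonneg_of_mem_Icc hθ) hc

theorem exp_ofReal_mul_I_sub_ne_zero {c : ℂ} (hc : ‖c‖ ≠ 1) (θ : ℝ) : exp (θ * I) - c ≠ 0 :=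
  fun h => hc (sub_eq_zero.1 h ▸ norm_exp_ofReal_mul_I θ)

theorem exp_ofReal_mul_I_add_ne_zero {c : ℂ} (hc : ‖c‖ ≠ 1) (θ : ℝ) : exp (θ * I) + c ≠ 0 := by
  simpa using exp_ofReal_mul_I_sub_ne_zero (c := -c) (by rwa [norm_neg]) θ

theorem hasDerivAt_exp_ofReal_mul_I (θ : ℝ) :
    HasDerivAt (fun t : ℝ => exp (t * I)) (exp (θ * I) * I) θ :=
  (hasDerivAt_mul_const I).comp_ofReal.cexp

theorem hasDerivAt_log_exp_mul_I_sub {c : ℂ} {θ : ℝ} (h : exp (θ * I) - c ∈ slitPlane) :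
    HasDerivAt (fun t : ℝ => log (exp (t * I) - c))
      (1 / (exp (θ * I) - c) * (I * exp (θ * I))) θ := by
  convert ((hasDerivAt_exp_ofReal_mul_I θ).sub_const c).clog_real h using 1
  ring

theorem hasDerivAt_log_sub_exp_mul_I {c : ℂ} {θ : ℝ} (h : c - exp (θ * I) ∈ slitPlane) :
    HasDerivAt (fun t : ℝ => log (c - exp (t * I)))
      (1 / (exp (θ * I) - c) * (I * exp (θ * I))) θ := by
  convert ((hasDerivAt_exp_ofReal_mul_I θ).const_sub c).clog_real h using 1
  rw [← neg_sub, div_neg, neg_div]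
  ring

/-- A branch of `log ((z - α) (z + 1/α) / ((z + α) (z - 1/α)))` along `z = e^{iθ}`, continuous
for `θ ∈ [-π/2, π/2]`. -/
noncomputable def logPotential (α θ : ℝ) : ℂ :=
  log (exp (θ * I) - α) - log (exp (θ * I) - ↑(-α)) + log (exp (θ * I) - ↑(-α⁻¹))
    - log (↑α⁻¹ - exp (θ * I))

theorem hasDerivAt_logPotential {α θ : ℝ} (hα0 : 0 < α) (hα1 : α < 1)
    (hθ : θ ∈ Set.Icc (-(π / 2)) (π / 2)) :
    HasDerivAt (logPotential α)
      ((1 / (exp (θ * I) - α) - 1 / (exp (θ * I) + α) + 1 / (exp (θ * I) + 1 / α)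
        - 1 / (exp (θ * I) - 1 / α)) * (I * exp (θ * I))) θ := by
  have hα1' : 1 < α⁻¹ := one_lt_inv_iff₀.2 ⟨hα0, hα1⟩
  have h1 := hasDerivAt_log_exp_mul_I_sub (exp_ofReal_mul_I_sub_mem_slitPlane hθ hα1)
  have h2 := hasDerivAt_log_exp_mul_I_sub
    (exp_ofReal_mul_I_sub_mem_slitPlane hθ (c := -α) (by linarith))
  have h3 := hasDerivAt_log_exp_mul_I_sub
    (exp_ofReal_mul_I_sub_mem_slitPlane hθ (c := -α⁻¹) (by linarith))
  have h4 := hasDerivAt_log_sub_exp_mul_I (ofReal_sub_mem_slitPlane (norm_exp_ofReal_mul_I θ) hα1')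
  refine (((h1.sub h2).add h3).sub h4).congr_deriv ?_
  push_cast
  ring

theorem im_logPotential_sub {α : ℝ} (hα0 : 0 < α) :
    (logPotential α (π / 2) - logPotential α (-(π / 2))).im = 8 * Real.arctan α := by
  have hends : logPotential α (π / 2) - logPotential α (-(π / 2)) =
      (log (↑(-α) + I) - log (↑(-α) - I)) - (log (α + I) - log (α - I))
        + 2 * (log (↑α⁻¹ + I) - log (↑α⁻¹ - I)) := by
    simp only [logPotential]
    push_cast
    rw [exp_pi_div_two_mul_I, ← neg_div, exp_neg_pi_div_two_mul_I]
    ring_nf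
  rw [hends, add_im, sub_im, mul_im, re_ofNat, im_ofNat, im_log_ofReal_add_I_sub_log_ofReal_sub_I,
    im_log_ofReal_add_I_sub_log_ofReal_sub_I, im_log_ofReal_add_I_sub_log_ofReal_sub_I,
    Real.arctan_neg, Real.arctan_inv_of_pos hα0]
  ring

theorem stmt_19 (α : ℝ) (hα : α ∈ Set.Ioo (0 : ℝ) 1) :
    (1 / 2) * (∫ θ in (-(Real.pi / 2))..(Real.pi / 2),
        ((1 / (Complex.exp (θ * Complex.I) - (α : ℂ))
          - 1 / (Complex.exp (θ * Complex.I) + (α : ℂ))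
          + 1 / (Complex.exp (θ * Complex.I) + 1 / (α : ℂ))
          - 1 / (Complex.exp (θ * Complex.I) - 1 / (α : ℂ)))
          * (Complex.I * Complex.exp (θ * Complex.I)))).im
      = 4 * Real.arctan α := by
  obtain ⟨hα0, hα1⟩ := hα
  have hnorm : ‖(α : ℂ)‖ ≠ 1 := by
    rw [norm_real, Real.norm_of_nonneg hα0.le]
    exact hα1.ne
  have hnorm_inv : ‖1 / (α : ℂ)‖ ≠ 1 := by
    rw [norm_div, norm_one, norm_real, Real.norm_of_nonneg hα0.le, one_div]
    exact (one_lt_inv_iff₀.2 ⟨hα0, hα1⟩).ne'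
  have hcont : Continuous fun θ : ℝ =>
      (1 / (exp (θ * I) - α) - 1 / (exp (θ * I) + α) + 1 / (exp (θ * I) + 1 / α)
        - 1 / (exp (θ * I) - 1 / α)) * (I * exp (θ * I)) := by
    fun_prop (disch := first
      | exact exp_ofReal_mul_I_sub_ne_zero ‹_›
      | exact exp_ofReal_mul_I_add_ne_zero ‹_›)
  have hle : -(π / 2) ≤ π / 2 := by linarith [Real.pi_pos]
  have hderiv (θ : ℝ) (hθ : θ ∈ Set.uIcc (-(π / 2)) (π / 2)) :=
    hasDerivAt_logPotential hα0 hα1 (by rwa [Set.uIcc_of_le hle] at hθ)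
  rw [integral_eq_sub_of_hasDerivAt hderiv (hcont.intervalIntegrable _ _), im_logPotential_sub hα0]
  ring
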